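/- arXiv:2402.02403 — 2 statements merged into one kernel-verified Lean document; each statement's English description precedes it below -/
import Mathlib

section
/- Let G = (V, E) be a finite connected simple graph and suppose V_1, V_2 ⊆ V satisfy: (1) V_1 ∩ V_2 = ∅, and (2) for every u ∈ V_1, every neighbor of u in G lies in V_2 (i.e., N(u) ⊆ V_2). Then rt(G) · |V_2| ≥ ⌊|V_1|/2⌋; in particular rt(G) = Ω(|V_1|/|V_2|). -/
/-- A routing round on `G`: the swap permutation of a matching of `G`, i.e. an involution
of the vertices that moves vertices only along edges of `G`. -/
def isRound {V : Type*} (G : SimpleGraph V) (σ : Equiv.Perm V) : Prop :=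
  σ * σ = 1 ∧ ∀ v : V, σ v ≠ v → G.Adj v (σ v)

/-- Composition, in order, of a list of round permutations: for `L = [σ₁, …, σₘ]`,
`rComp L = σₘ ∘ ⋯ ∘ σ₁`. -/
def rComp {V : Type*} (L : List (Equiv.Perm V)) : Equiv.Perm V :=
  L.foldl (fun p σ => σ * p) 1

/-- `rt(G, π)`: the minimum number of routing rounds (matchings of `G`) whose swap
permutations, composed in order, realize the permutation `π`. -/
noncomputable def rtP {V : Type*} (G : SimpleGraph V) (π : Equiv.Perm V) : ℕ :=
  sInf {m | ∃ L : List (Equiv.Perm V), L.length = m ∧ (∀ σ ∈ L, isRound G σ) ∧ rComp L = π}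

/-- `rt(G)`: the routing number of `G`, the maximum of `rt(G, π)` over all permutations. -/
noncomputable def rt {V : Type*} [Fintype V] [DecidableEq V] (G : SimpleGraph V) : ℕ :=
  Finset.univ.sup (rtP G)

/-!
A round moves a vertex `u ∈ V₁` only along an edge, hence into `V₂`, and it is injective, so it
moves at most `|V₂|` vertices of `V₁`. A vertex moved by a composition of rounds is moved by one
of them, so realizing a permutation that moves every vertex of `V₁` (a cycle through `V₁`) takes
at least `|V₁| / |V₂|` rounds; such a realization exists because the swaps along the edges of a
connected graph generate the whole symmetric group.
-/

open Equiv Finset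

lemma Finset.exists_perm_support_eq {α : Type*} [Fintype α] [DecidableEq α] (s : Finset α)
    (hs : #s ≠ 1) : ∃ π : Perm α, π.support = s := by
  refine ⟨s.toList.formPerm, ?_⟩
  rw [List.support_formPerm_of_nodup _ s.nodup_toList, toList_toFinset]
  rintro x hx
  exact hs (by rw [← length_toList, hx, List.length_singleton])

section Routing

variable {V : Type*} {G : SimpleGraph V}

lemma rComp_eq_prod_reverse (L : List (Perm V)) : rComp L = L.reverse.prod := by
  induction L using List.reverseRecOn with
  | nil => rfl
  | append_singleton L σ ih => simp [rComp, ← ih]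

lemma isRound_swap [DecidableEq V] {u v : V} (h : G.Adj u v) : isRound G (swap u v) := by
  refine ⟨swap_mul_self u v, fun w hw => ?_⟩
  obtain ⟨-, rfl | rfl⟩ := swap_apply_ne_self_iff.mp hw
  · rwa [swap_apply_left]
  · rw [swap_apply_right]; exact h.symm

lemma swap_mem_closure_isRound_of_reachable [DecidableEq V] {u v : V} (h : G.Reachable u v) :
    swap u v ∈ Submonoid.closure {σ | isRound G σ} := by
  obtain ⟨p⟩ := h
  induction p with
  | nil => rw [swap_self]; exact one_mem _
  | cons hadj _ ih =>
    exact SubmonoidClass.swap_mem_trans _ (Submonoid.subset_closure (isRound_swap hadj)) ih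

lemma closure_isRound_eq_top [Finite V] [DecidableEq V] (hG : G.Connected) :
    Submonoid.closure {σ | isRound G σ} = ⊤ := by
  refine (Submonoid.eq_top_iff' _).mpr fun π => ?_
  induction π using Perm.swap_induction_on with
  | one => exact one_mem _
  | swap_mul π u v _ hπ =>
    exact mul_mem (swap_mem_closure_isRound_of_reachable (hG.preconnected u v)) hπ

lemma exists_rComp_eq [Finite V] [DecidableEq V] (hG : G.Connected) (π : Perm V) :
    ∃ L : List (Perm V), (∀ σ ∈ L, isRound G σ) ∧ rComp L = π := by
  have hπ : π ∈ Submonoid.closure {σ | isRound G σ} := by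
    rw [closure_isRound_eq_top hG]; trivial
  obtain ⟨l, hl, rfl⟩ := Submonoid.exists_list_of_mem_closure hπ
  exact ⟨l.reverse, fun σ hσ => hl σ (List.mem_reverse.mp hσ), by
    rw [rComp_eq_prod_reverse, List.reverse_reverse]⟩

lemma exists_length_eq_rtP_rComp_eq [Finite V] [DecidableEq V] (hG : G.Connected)
    (π : Perm V) :
    ∃ L : List (Perm V), L.length = rtP G π ∧ (∀ σ ∈ L, isRound G σ) ∧ rComp L = π := by
  obtain ⟨L, hL, hπ⟩ := exists_rComp_eq hG π
  exact Nat.sInf_mem (s := {m | ∃ L : List (Perm V), L.length = m ∧ (∀ σ ∈ L, isRound G σ) ∧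
    rComp L = π}) ⟨L.length, L, rfl, hL, hπ⟩

lemma rtP_le_rt [Fintype V] [DecidableEq V] (π : Perm V) : rtP G π ≤ rt G :=
  le_sup (mem_univ π)

section Bottleneck

variable [Fintype V] [DecidableEq V] {V₁ V₂ : Finset V}

lemma isRound.card_inter_support_le {σ : Perm V} (hσ : isRound G σ)
    (hN : ∀ u ∈ V₁, ∀ w : V, G.Adj u w → w ∈ V₂) : #(V₁ ∩ σ.support) ≤ #V₂ := by
  refine card_le_card_of_injOn σ (fun u hu => ?_) σ.injective.injOn
  obtain ⟨hu₁, hu⟩ := mem_inter.mp hu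
  exact hN u hu₁ _ (hσ.2 u (Perm.mem_support.mp hu))

lemma card_inter_support_prod_le {l : List (Perm V)} (hl : ∀ σ ∈ l, isRound G σ)
    (hN : ∀ u ∈ V₁, ∀ w : V, G.Adj u w → w ∈ V₂) :
    #(V₁ ∩ l.prod.support) ≤ l.length * #V₂ := by
  induction l with
  | nil => simp
  | cons σ l ih =>
    have hsub : V₁ ∩ (σ * l.prod).support ⊆ V₁ ∩ σ.support ∪ V₁ ∩ l.prod.support := by
      rw [← inter_union_distrib_left]
      exact inter_subset_inter_left (Perm.support_mul_le σ l.prod)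
    calc #(V₁ ∩ (σ :: l).prod.support)
        ≤ #(V₁ ∩ σ.support) + #(V₁ ∩ l.prod.support) :=
          (card_le_card hsub).trans (card_union_le _ _)
      _ ≤ #V₂ + l.length * #V₂ :=
          add_le_add ((hl σ (by simp)).card_inter_support_le hN)
            (ih fun τ hτ => hl τ (by simp [hτ]))
      _ = (σ :: l).length * #V₂ := by simp [add_mul, add_comm]

lemma card_inter_support_le_rtP_mul (hG : G.Connected)
    (hN : ∀ u ∈ V₁, ∀ w : V, G.Adj u w → w ∈ V₂) (π : Perm V) :
    #(V₁ ∩ π.support) ≤ rtP G π * #V₂ := by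
  obtain ⟨L, hlen, hL, rfl⟩ := exists_length_eq_rtP_rComp_eq hG π
  rw [← hlen, rComp_eq_prod_reverse, ← List.length_reverse]
  exact card_inter_support_prod_le (fun σ hσ => hL σ (List.mem_reverse.mp hσ)) hN

end Bottleneck

end Routing

theorem bottleneck_lower_bound_general
    {V : Type*} [Fintype V] [DecidableEq V] (G : SimpleGraph V) (hG : G.Connected)
    (V₁ V₂ : Finset V)
    (hN : ∀ u ∈ V₁, ∀ w : V, G.Adj u w → w ∈ V₂) :
    V₁.card / 2 ≤ rt G * V₂.card := by
  by_cases h₁ : #V₁ = 1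
  · simp [h₁]
  obtain ⟨π, hπ⟩ := V₁.exists_perm_support_eq h₁
  calc #V₁ / 2 ≤ #V₁ := Nat.div_le_self _ _
    _ = #(V₁ ∩ π.support) := by rw [hπ, inter_self]
    _ ≤ rtP G π * #V₂ := card_inter_support_le_rtP_mul hG hN π
    _ ≤ rt G * #V₂ := Nat.mul_le_mul_right _ (rtP_le_rt π)

/-- Bottleneck lemma: if `V₁` and `V₂` are disjoint vertex sets and every neighbor of every
vertex of `V₁` lies in `V₂`, then `rt(G) * |V₂| ≥ ⌊|V₁| / 2⌋`. -/
theorem bottleneck_lower_bound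
    {V : Type*} [Fintype V] [DecidableEq V] (G : SimpleGraph V) (hG : G.Connected)
    (V₁ V₂ : Finset V) (hdisj : Disjoint V₁ V₂)
    (hN : ∀ u ∈ V₁, ∀ w : V, G.Adj u w → w ∈ V₂) :
    V₁.card / 2 ≤ rt G * V₂.card :=
  bottleneck_lower_bound_general G hG V₁ V₂ hN
end

section
/- Let G = (V, E) be a finite connected simple graph on n vertices whose maximum matching has size ν ≥ 1. For every set P of k pairwise disjoint unordered pairs of vertices of G (no vertex belongs to two pairs, so k ≤ n/2), there exist matchings M_1, …, M_m of G with m ≤ 2 · rt(G) · ⌈k/ν⌉ such that every pair in P is served by the sequence M_1, …, M_m and the composition (in order) of all the associated swap permutations is the identity permutation of V. (This is the combinatorial core of the lemma doh(G) = O(rt(G) · n/ν).) -/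
/-- The position permutation after `t` rounds of the sequence `L`: `π_t = σ_t ∘ ⋯ ∘ σ_1`. -/
def rPos {V : Type*} (L : List (Equiv.Perm V)) (t : ℕ) : Equiv.Perm V :=
  rComp (L.take t)

/-- `F` is a matching of `G`, viewed as a finite set of edges of `G` that are pairwise
vertex-disjoint. -/
def isMatchingF {V : Type*} (G : SimpleGraph V) (F : Finset (Sym2 V)) : Prop :=
  (∀ e ∈ F, e ∈ G.edgeSet) ∧ (F : Set (Sym2 V)).Pairwise fun e f => ∀ x ∈ e, x ∉ f

/-!
Fix a matching `F` with `ν` edges. Any `ν` of the pairs can be sent onto the edges of `F` by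
one permutation `π`, realised in at most `rt G` rounds; undoing it with `π⁻¹` costs another
`rt G` rounds. Halfway through, every pair of the block sits on an edge of `F`, and the whole
block composes to the identity. Since every block is closed, concatenating `⌈k / ν⌉` of them
serves each pair in its own block while later blocks start from the original positions.
-/

open Finset Function

section Rounds

variable {V : Type*}

lemma foldl_eq_rComp_mul (L : List (Equiv.Perm V)) (x : Equiv.Perm V) :
    L.foldl (fun p σ => σ * p) x = rComp L * x := by
  induction L generalizing x with
  | nil => simp [rComp]
  | cons σ L ih =>
    simp only [List.foldl_cons, rComp, ih (σ * x), ih (σ * 1)]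
    group

lemma rComp_append (A B : List (Equiv.Perm V)) : rComp (A ++ B) = rComp B * rComp A := by
  rw [rComp, List.foldl_append, ← rComp, foldl_eq_rComp_mul]

lemma rComp_singleton (σ : Equiv.Perm V) : rComp [σ] = σ := by
  simp [rComp]

lemma isRound_swap_s4 [DecidableEq V] {G : SimpleGraph V} {x y : V} (h : G.Adj x y) :
    isRound G (Equiv.swap x y) := by
  refine ⟨Equiv.swap_mul_self x y, fun w hw => ?_⟩
  rcases eq_or_ne w x with rfl | hwx
  · simpa using h
  rcases eq_or_ne w y with rfl | hwy
  · simpa using h.symm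
  · exact absurd (Equiv.swap_apply_of_ne_of_ne hwx hwy) hw

def routableSubmonoid (G : SimpleGraph V) : Submonoid (Equiv.Perm V) where
  carrier := {π | ∃ L : List (Equiv.Perm V), (∀ σ ∈ L, isRound G σ) ∧ rComp L = π}
  one_mem' := ⟨[], by simp, rfl⟩
  mul_mem' := by
    rintro _ _ ⟨A, hA, rfl⟩ ⟨B, hB, rfl⟩
    exact ⟨B ++ A, List.forall_mem_append.2 ⟨hB, hA⟩, rComp_append B A⟩

variable [DecidableEq V] {G : SimpleGraph V}

lemma swap_mem_routableSubmonoid_of_reachable {x y : V} (h : G.Reachable x y) :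
    Equiv.swap x y ∈ routableSubmonoid G := by
  obtain ⟨p⟩ := h
  induction p with
  | nil =>
    rw [Equiv.swap_self]
    exact (routableSubmonoid G).one_mem
  | cons hadj _ ih =>
    refine SubmonoidClass.swap_mem_trans _ ?_ ih
    exact ⟨[Equiv.swap _ _], by simpa using isRound_swap_s4 hadj, rComp_singleton _⟩

lemma routableSubmonoid_eq_top [Finite V] (hG : G.Connected) : routableSubmonoid G = ⊤ := by
  rw [eq_top_iff, ← Equiv.Perm.mclosure_isSwap, Submonoid.closure_le]
  rintro _ ⟨x, y, -, rfl⟩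
  exact swap_mem_routableSubmonoid_of_reachable (hG x y)

lemma exists_rounds_length_le_rt [Fintype V] (hG : G.Connected) (π : Equiv.Perm V) :
    ∃ L : List (Equiv.Perm V), (∀ σ ∈ L, isRound G σ) ∧ L.length ≤ rt G ∧ rComp L = π := by
  obtain ⟨L₀, hL₀, hπ⟩ : π ∈ routableSubmonoid G := by
    simp [routableSubmonoid_eq_top hG]
  have hne : {m | ∃ L : List (Equiv.Perm V), L.length = m ∧ (∀ σ ∈ L, isRound G σ) ∧
      rComp L = π}.Nonempty := ⟨L₀.length, L₀, rfl, hL₀, hπ⟩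
  obtain ⟨L, hlen, hL, hLπ⟩ := Nat.sInf_mem hne
  exact ⟨L, hL, hlen ▸ Finset.le_sup (f := rtP G) (mem_univ π), hLπ⟩

end Rounds

section Serving

variable {V : Type*} (G : SimpleGraph V)

def Serves (L : List (Equiv.Perm V)) (x y : V) : Prop :=
  ∃ t ≤ L.length, G.Adj (rPos L t x) (rPos L t y)

variable {G}

lemma Serves.append_right {A : List (Equiv.Perm V)} {x y : V} (h : Serves G A x y)
    (B : List (Equiv.Perm V)) : Serves G (A ++ B) x y := by
  obtain ⟨t, ht, hadj⟩ := h
  refine ⟨t, by simp only [List.length_append]; omega, ?_⟩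
  rwa [rPos, List.take_append_of_le_length ht]

lemma Serves.append_left {B : List (Equiv.Perm V)} {x y : V} (h : Serves G B x y)
    {A : List (Equiv.Perm V)} (hA : rComp A = 1) : Serves G (A ++ B) x y := by
  obtain ⟨t, ht, hadj⟩ := h
  refine ⟨A.length + t, by simp only [List.length_append]; omega, ?_⟩
  rwa [rPos, List.take_length_add_append, rComp_append, hA, mul_one]

lemma exists_closed_rounds_serving_of_perm [Fintype V] [DecidableEq V] (hG : G.Connected)
    (π : Equiv.Perm V) :
    ∃ B : List (Equiv.Perm V), (∀ σ ∈ B, isRound G σ) ∧ B.length ≤ 2 * rt G ∧ rComp B = 1 ∧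
      ∀ x y, G.Adj (π x) (π y) → Serves G B x y := by
  obtain ⟨L₁, hL₁, hlen₁, hπ₁⟩ := exists_rounds_length_le_rt hG π
  obtain ⟨L₂, hL₂, hlen₂, hπ₂⟩ := exists_rounds_length_le_rt hG π⁻¹
  refine ⟨L₁ ++ L₂, List.forall_mem_append.2 ⟨hL₁, hL₂⟩, by simp only [List.length_append]; omega,
    by rw [rComp_append, hπ₁, hπ₂, inv_mul_cancel], fun x y hxy => ⟨L₁.length, by simp, ?_⟩⟩
  rwa [rPos, List.take_left, hπ₁]

end Serving

namespace isMatchingF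

variable {V : Type*} {G : SimpleGraph V} {F : Finset (Sym2 V)}

lemma eq_of_mem_of_mem (hF : isMatchingF G F) {e f : Sym2 V} (he : e ∈ F) (hf : f ∈ F)
    {x : V} (hxe : x ∈ e) (hxf : x ∈ f) : e = f := by
  by_contra hne
  exact hF.2 he hf hne x hxe hxf

lemma adj_out (hF : isMatchingF G F) (e : F) : G.Adj e.1.out.1 e.1.out.2 := by
  have h := hF.1 e e.2
  rw [← e.1.out_eq] at h
  exact h

lemma injective_sumElim_out (hF : isMatchingF G F) :
    Injective (Sum.elim (fun e : F => e.1.out.1) (fun e : F => e.1.out.2)) := by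
  have key : ∀ {e f : F} {x : V}, x ∈ e.1 → x ∈ f.1 → e = f := fun hxe hxf =>
    Subtype.ext (hF.eq_of_mem_of_mem (Subtype.prop _) (Subtype.prop _) hxe hxf)
  refine Injective.sumElim (fun e f h => key (Sym2.out_fst_mem _) (h ▸ Sym2.out_fst_mem _))
    (fun e f h => key (Sym2.out_snd_mem _) (h ▸ Sym2.out_snd_mem _)) fun e f h => ?_
  obtain rfl := key (Sym2.out_fst_mem _) (h ▸ Sym2.out_snd_mem f.1)
  exact (hF.adj_out e).ne h

lemma exists_perm_adj {ι : Type*} (hF : isMatchingF G F) {u v : ι → V}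
    (hinj : Injective (Sum.elim u v)) {s : Finset ι} (hs : #s ≤ #F) :
    ∃ π : Equiv.Perm V, ∀ i ∈ s, G.Adj (π (u i)) (π (v i)) := by
  obtain ⟨emb⟩ : Nonempty (s ↪ F) :=
    Embedding.nonempty_of_card_le (by simpa only [Fintype.card_coe] using hs)
  obtain ⟨π, hπ⟩ := Equiv.Perm.exists_extending_pair
    (Sum.elim u v ∘ Sum.map (↑) (↑) : s ⊕ s → V)
    (Sum.elim (fun e : F => e.1.out.1) (fun e : F => e.1.out.2) ∘ Sum.map emb emb)
    (hinj.comp (Subtype.val_injective.sumMap Subtype.val_injective))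
    (hF.injective_sumElim_out.comp (emb.injective.sumMap emb.injective))
  refine ⟨π, fun i hi => ?_⟩
  have hu := hπ (Sum.inl ⟨i, hi⟩)
  have hv := hπ (Sum.inr ⟨i, hi⟩)
  simp only [comp_apply, Sum.map_inl, Sum.map_inr, Sum.elim_inl, Sum.elim_inr] at hu hv
  rw [hu, hv]
  exact hF.adj_out _

end isMatchingF

lemma exists_closed_rounds_serving_of_card_le_mul {V ι : Type*} [Fintype V] [DecidableEq V]
    {G : SimpleGraph V} (hG : G.Connected) {F : Finset (Sym2 V)} (hF : isMatchingF G F)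
    {u v : ι → V} (hinj : Injective (Sum.elim u v)) (q : ℕ) (s : Finset ι)
    (hs : #s ≤ q * #F) :
    ∃ L : List (Equiv.Perm V), (∀ σ ∈ L, isRound G σ) ∧ L.length ≤ 2 * rt G * q ∧
      rComp L = 1 ∧ ∀ i ∈ s, Serves G L (u i) (v i) := by
  classical
  induction q generalizing s with
  | zero =>
    obtain rfl : s = ∅ := card_eq_zero.1 (by simpa using hs)
    exact ⟨[], by simp, by simp, rfl, by simp⟩
  | succ q ih =>
    obtain ⟨t, hts, ht⟩ := exists_subset_card_eq (min_le_left #s #F)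
    obtain ⟨π, hπ⟩ := hF.exists_perm_adj hinj (s := t) (by omega)
    obtain ⟨B, hB, hlenB, hB1, hservesB⟩ := exists_closed_rounds_serving_of_perm hG π
    have hrest : #(s \ t) ≤ q * #F := by
      rw [card_sdiff_of_subset hts, ht]
      rw [Nat.succ_mul] at hs
      omega
    obtain ⟨L, hL, hlenL, hL1, hservesL⟩ := ih (s \ t) hrest
    refine ⟨B ++ L, List.forall_mem_append.2 ⟨hB, hL⟩, ?_, by rw [rComp_append, hB1, hL1, mul_one],
      fun i hi => ?_⟩
    · simp only [List.length_append]
      rw [Nat.mul_succ]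
      omega
    · by_cases hit : i ∈ t
      · exact (hservesB _ _ (hπ i hit)).append_right L
      · exact (hservesL i (mem_sdiff.2 ⟨hi, hit⟩)).append_left hB1

theorem depth_overhead_upper_bound_by_matching_general
    {V : Type*} [Fintype V] [DecidableEq V] (G : SimpleGraph V) (hG : G.Connected)
    (ν : ℕ) (hν : 1 ≤ ν)
    (hex : ∃ F : Finset (Sym2 V), isMatchingF G F ∧ F.card = ν)
    (k : ℕ) (u v : Fin k → V)
    (hinj : Function.Injective (Sum.elim u v : Fin k ⊕ Fin k → V)) :
    ∃ L : List (Equiv.Perm V),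
      (∀ σ ∈ L, isRound G σ) ∧
      L.length ≤ 2 * rt G * ((k + ν - 1) / ν) ∧
      rComp L = 1 ∧
      ∀ i : Fin k, ∃ t ≤ L.length, G.Adj (rPos L t (u i)) (rPos L t (v i)) := by
  obtain ⟨F, hF, rfl⟩ := hex
  have hk : #(univ : Finset (Fin k)) ≤ (k + #F - 1) / #F * #F := by
    have := Nat.lt_div_mul_add (a := k + #F - 1) hν
    simp only [card_univ, Fintype.card_fin]
    omega
  obtain ⟨L, hL, hlen, hL1, hserves⟩ :=
    exists_closed_rounds_serving_of_card_le_mul hG hF hinj _ univ hk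
  exact ⟨L, hL, hlen, hL1, fun i => hserves i (mem_univ i)⟩

/-- If the maximum matching of a finite connected graph `G` has size `ν ≥ 1`, then any
collection of `k` pairwise disjoint pairs `{u i, v i}` of vertices (all `2k` vertices
distinct) can be served by a sequence of at most `2 * rt G * ⌈k / ν⌉` matchings of `G`
whose swap permutations compose (in order) to the identity. -/
theorem depth_overhead_upper_bound_by_matching
    {V : Type*} [Fintype V] [DecidableEq V] (G : SimpleGraph V) (hG : G.Connected)
    (ν : ℕ) (hν : 1 ≤ ν)
    (hex : ∃ F : Finset (Sym2 V), isMatchingF G F ∧ F.card = ν)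
    (hmax : ∀ F : Finset (Sym2 V), isMatchingF G F → F.card ≤ ν)
    (k : ℕ) (u v : Fin k → V)
    (hinj : Function.Injective (Sum.elim u v : Fin k ⊕ Fin k → V)) :
    ∃ L : List (Equiv.Perm V),
      (∀ σ ∈ L, isRound G σ) ∧
      L.length ≤ 2 * rt G * ((k + ν - 1) / ν) ∧
      rComp L = 1 ∧
      ∀ i : Fin k, ∃ t ≤ L.length, G.Adj (rPos L t (u i)) (rPos L t (v i)) :=
  depth_overhead_upper_bound_by_matching_general G hG ν hν hex k u v hinj
end
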